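/- arXiv:2407.11797 — 2 statements merged into one kernel-verified Lean document; each statement's English description precedes it below -/
import Mathlib

section
/- Let K be a scattering kernel. Then for any n, ω ∈ S² there exist finitely many points n₁, …, n_N ∈ S² such that, setting n₀ = n and n_{N+1} = ω, one has K(n_{i−1}, n_i) > 0 for every i ∈ {1, …, N+1}. -/
open MeasureTheory Metric

noncomputable section

/-- The ambient Euclidean space `ℝ³`. -/
abbrev E3 : Type := EuclideanSpace ℝ (Fin 3)

/-- The unit sphere `S² ⊂ ℝ³`. -/
abbrev S2 : Type := Metric.sphere (0 : E3) 1

/-- The surface measure on the unit sphere `S²` (with total mass `4π`). -/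
def μS : Measure S2 := (volume : Measure E3).toSphere

/-- A rotation of `ℝ³`: an orthogonal (i.e. norm preserving linear) transformation with
determinant `1`, i.e. an element of `SO(3)`. -/
def IsRotation (R : E3 ≃ₗᵢ[ℝ] E3) : Prop :=
  LinearMap.det (R.toLinearEquiv : E3 →ₗ[ℝ] E3) = 1

/-- The action of an orthogonal transformation on the unit sphere. -/
def rotate (R : E3 ≃ₗᵢ[ℝ] E3) (n : S2) : S2 :=
  ⟨R n, by
    have hn : ‖(n : E3)‖ = 1 := mem_sphere_zero_iff_norm.mp n.2
    simp [mem_sphere_zero_iff_norm, hn]⟩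

/-- A scattering kernel: a continuous, non-negative, rotation invariant function
`K : S² × S² → ℝ` with `∫_{S²} K(n,n') dn = 1` for every `n'`. -/
structure IsScatteringKernel (K : S2 → S2 → ℝ) : Prop where
  continuous : Continuous (Function.uncurry K)
  nonneg : ∀ n n' : S2, 0 ≤ K n n'
  normalized : ∀ n' : S2, ∫ n : S2, K n n' ∂μS = 1
  rotation_invariant : ∀ R : E3 ≃ₗᵢ[ℝ] E3, IsRotation R →
    ∀ n n' : S2, K (rotate R n) (rotate R n') = K n n'

/-! Rotation invariance makes `K` symmetric: two unit vectors `m, n` are exchanged by the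
half-turn about the line through `m + n` (about any line orthogonal to `m` if `n = -m`), and a
half-turn of `ℝ³` has determinant `(-1)² = 1`. The normalization gives every `x` some `m` with
`K m x > 0`, and by continuity `{y | K m y > 0}` is a neighbourhood of `x` whose points are all
joined to `x` through `m`. Hence the classes of the transitive closure of `K > 0` are open, and
the sphere, being connected, is a single class. -/

open Relation

section Reflection

open Module Submodule
open scoped RealInnerProductSpace

variable {F : Type*} [NormedAddCommGroup F] [InnerProductSpace ℝ F] [FiniteDimensional ℝ F]

theorem exists_ne_zero_inner_eq_zero (hF : 2 ≤ finrank ℝ F) (m : F) : ∃ u ≠ 0, ⟪u, m⟫ = 0 := by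
  have hm : finrank ℝ (ℝ ∙ m) ≤ 1 := (finrank_span_le_card ({m} : Set F)).trans (by simp)
  have hsum := (ℝ ∙ m).finrank_add_finrank_orthogonal
  obtain ⟨u, hu, hu0⟩ := exists_mem_ne_zero_of_ne_bot
    (finrank_eq_zero.not.mp (by omega) : (ℝ ∙ m)ᗮ ≠ ⊥)
  exact ⟨u, hu0, mem_orthogonal_singleton_iff_inner_left.mp hu⟩

theorem exists_reflection_span_singleton_eq (hF : 2 ≤ finrank ℝ F) {m n : F} (h : ‖m‖ = ‖n‖) :
    ∃ u ≠ 0, reflection (ℝ ∙ u) m = n := by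
  by_cases hmn : m + n = 0
  · obtain ⟨u, hu, hum⟩ := exists_ne_zero_inner_eq_zero hF m
    refine ⟨u, hu, ?_⟩
    rw [reflection_mem_subspace_orthogonalComplement_eq_neg
      (mem_orthogonal_singleton_iff_inner_right.mpr hum), neg_eq_of_add_eq_zero_right hmn]
  · refine ⟨m + n, hmn, ?_⟩
    have h' := reflection_sub (v := m) (w := -n) (by rwa [norm_neg])
    rw [sub_neg_eq_add, reflection_orthogonal] at h'
    simpa using h'

theorem isRotation_reflection_span_singleton {u : E3} (hu : u ≠ 0) :
    IsRotation (reflection (ℝ ∙ u)) := by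
  have : Fact (finrank ℝ E3 = 2 + 1) := ⟨finrank_euclideanSpace_fin⟩
  rw [IsRotation, det_reflection, finrank_orthogonal_span_singleton (n := 2) hu]
  norm_num

end Reflection

theorem Relation.TransGen.exists_chain {α : Type*} {r : α → α → Prop} {a b : α}
    (h : TransGen r a b) : ∃ (N : ℕ) (f : ℕ → α), f 0 = a ∧ f (N + 1) = b ∧
      ∀ i : ℕ, 1 ≤ i → i ≤ N + 1 → r (f (i - 1)) (f i) := by
  induction h with
  | single hab =>
    refine ⟨0, fun i => if i = 0 then a else _, rfl, rfl, fun i h1 h2 => ?_⟩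
    obtain rfl : i = 1 := by omega
    simpa using hab
  | @tail b c _ hbc ih =>
    obtain ⟨N, f, hf0, hfN, hf⟩ := ih
    refine ⟨N + 1, fun i => if i ≤ N + 1 then f i else c, by simpa using hf0, by simp,
      fun i h1 h2 => ?_⟩
    rcases Nat.lt_or_ge (N + 1) i with hi | hi
    · obtain rfl : i = N + 2 := by omega
      simpa [hfN] using hbc
    · simpa [hi, show i - 1 ≤ N + 1 by omega] using hf i h1 hi

theorem PreconnectedSpace.transGen_of_symm {X : Type*} [TopologicalSpace X] [PreconnectedSpace X]
    {r : X → X → Prop} (hsymm : ∀ x y, r x y → r y x) (hopen : ∀ x, IsOpen {y | r x y})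
    (hex : ∀ y, ∃ x, r x y) (x y : X) : TransGen r x y := by
  refine PreconnectedSpace.induction₂' (TransGen r) (fun x => ?_) inferInstance x y
  obtain ⟨m, hm⟩ := hex x
  filter_upwards [(hopen m).mem_nhds hm] with y hy
  exact ⟨.head (hsymm _ _ hm) (.single hy), .head (hsymm _ _ hy) (.single hm)⟩

instance : PreconnectedSpace S2 :=
  Subtype.preconnectedSpace <| isPreconnected_sphere
    (by rw [← Module.finrank_eq_rank, finrank_euclideanSpace_fin]; norm_num) 0 1

namespace IsScatteringKernel

variable {K : S2 → S2 → ℝ}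

theorem symm (hK : IsScatteringKernel K) (a b : S2) : K a b = K b a := by
  obtain ⟨u, hu, hab⟩ := exists_reflection_span_singleton_eq (F := E3)
    (by simp) (m := a) (n := b) (by simp)
  have hba : Submodule.reflection (ℝ ∙ u) b = a := by rw [← hab, Submodule.reflection_reflection]
  have h := hK.rotation_invariant _ (isRotation_reflection_span_singleton hu) a b
  rwa [show rotate _ a = b from Subtype.ext hab, show rotate _ b = a from Subtype.ext hba,
    eq_comm] at h

theorem exists_pos (hK : IsScatteringKernel K) (n' : S2) : ∃ n, 0 < K n n' := by
  by_contra! h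
  have hzero : (fun n => K n n') = 0 := funext fun n => le_antisymm (h n) (hK.nonneg n n')
  simpa [hzero] using hK.normalized n'

end IsScatteringKernel

/-- For a scattering kernel `K` and any `n, ω ∈ S²` there exist finitely many points
`n₁, …, n_N ∈ S²` such that, setting `n₀ = n` and `n_{N+1} = ω`, one has
`K(n_{i−1}, n_i) > 0` for every `i ∈ {1, …, N+1}`. -/
theorem scatteringKernel_chain_pos (K : S2 → S2 → ℝ) (hK : IsScatteringKernel K) (n ω : S2) :
    ∃ (N : ℕ) (f : ℕ → S2), f 0 = n ∧ f (N + 1) = ω ∧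
      ∀ i : ℕ, 1 ≤ i → i ≤ N + 1 → 0 < K (f (i - 1)) (f i) := by
  have hsymm : ∀ a b, 0 < K a b → 0 < K b a := fun a b hab => by rwa [hK.symm]
  have hopen : ∀ m, IsOpen {y | 0 < K m y} := fun m =>
    isOpen_lt continuous_const (hK.continuous.uncurry_left m)
  exact (PreconnectedSpace.transGen_of_symm hsymm hopen hK.exists_pos n ω).exists_chain
end
end

section
/- Let K : ℝ → ℝ be continuous, 2π-periodic, non-negative, and satisfy ∫_0^{2π} K(θ) dθ = 1. If f ∈ L^∞ is a 2π-periodic function satisfying the convolution equation ∫_0^{2π} K(θ − φ) f(φ) dφ = f(θ) for almost every θ, then f is almost everywhere equal to a constant. -/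
open MeasureTheory Real
open Set Metric Function

noncomputable section

/-!
Any function fixed by the convolution agrees a.e. with the convolution `g = K ∗ f`, which is
continuous and periodic, hence attains a maximum `M`; and `g` is itself a fixed point. At a
maximum point `θ`, `∫ K (θ - φ) (M - g φ) dφ = M - g θ = 0` with a nonnegative continuous
integrand, so `g (θ - t) = M` whenever `K t > 0`. The shifts preserving the level set `{g = M}`
thus form an additive monoid containing a ball (where `K > 0`) and `±2π`; the `n`-fold sums of
the ball are balls of radius growing linearly in `n`, so this monoid is all of `ℝ` and
`g ≡ M`.
-/

lemma Function.Periodic.eq_zero_of_intervalIntegral_eq_zero {h : ℝ → ℝ} {p : ℝ} (hp : 0 < p)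
    (hper : Periodic h p) (hc : Continuous h) (hnonneg : ∀ x, 0 ≤ h x)
    (hint : ∫ x in 0..p, h x = 0) : h = 0 := by
  funext y
  set a := y - p / 2 with ha
  have hint' : ∫ x in a..a + p, h x = 0 := by rw [hper.intervalIntegral_add_eq a 0, zero_add, hint]
  have hae : h =ᵐ[volume.restrict (Ioc a (a + p))] 0 :=
    (intervalIntegral.integral_eq_zero_iff_of_le_of_nonneg_ae (by linarith)
      (.of_forall hnonneg) (hc.intervalIntegrable _ _)).1 hint'
  exact Measure.eqOn_open_of_ae_eq (ae_restrict_of_ae_restrict_of_subset Ioo_subset_Ioc_self hae)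
    isOpen_Ioo hc.continuousOn continuousOn_const ⟨by linarith, by linarith⟩

namespace AddSubmonoid

lemma ball_succ_nsmul_subset {S : AddSubmonoid ℝ} {a δ : ℝ} (hδ : 0 < δ)
    (hball : ball a δ ⊆ S) (n : ℕ) : ball ((n + 1) • a) ((n + 1) • δ) ⊆ S := by
  induction n with
  | zero => simpa using hball
  | succ n ih =>
    rw [succ_nsmul _ (n + 1), succ_nsmul _ (n + 1), ← ball_add_ball (by positivity) hδ]
    exact Set.add_subset_iff.2 fun x hx y hy => S.add_mem (ih hx) (hball hy)

lemma zsmul_mem_of_mem_of_neg_mem {S : AddSubmonoid ℝ} {p : ℝ} (hp : p ∈ S) (hnegp : -p ∈ S)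
    (k : ℤ) : k • p ∈ S := by
  induction k using Int.induction_on with
  | zero => simp
  | succ i ih => rw [add_zsmul, one_zsmul]; exact S.add_mem ih hp
  | pred i ih => rw [sub_zsmul, one_zsmul]; exact S.add_mem ih hnegp

/-- Every real number is congruent modulo `p` to a point of some large ball `n • ball a δ`. -/
lemma eq_top_of_ball_subset {S : AddSubmonoid ℝ} {a δ p : ℝ} (hδ : 0 < δ) (hp : 0 < p)
    (hball : ball a δ ⊆ S) (hpS : p ∈ S) (hnegpS : -p ∈ S) : S = ⊤ := by
  obtain ⟨n, hn⟩ := exists_nat_gt (p / δ)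
  refine eq_top_iff.2 fun x _ => ?_
  set c := (n + 1) • a
  have hmod : toIcoMod hp (c - p / 2) x ∈ ball c ((n + 1) • δ) := by
    have hmem := toIcoMod_mem_Ico hp (c - p / 2) x
    have hnδ : p < n * δ := (div_lt_iff₀ hδ).1 hn
    rw [mem_ball, Real.dist_eq, abs_lt, nsmul_eq_mul]
    push_cast
    constructor <;> nlinarith [hmem.1, hmem.2]
  rw [← toIcoMod_add_toIcoDiv_zsmul hp (c - p / 2) x]
  exact S.add_mem (ball_succ_nsmul_subset hδ hball n hmod)
    (zsmul_mem_of_mem_of_neg_mem hpS hnegpS _)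

end AddSubmonoid

def levelShifts (g : ℝ → ℝ) (M : ℝ) : AddSubmonoid ℝ where
  carrier := {t | ∀ θ, g θ = M → g (θ - t) = M}
  add_mem' {s t} hs ht θ hθ := by rw [sub_add_eq_sub_sub_swap]; exact hs _ (ht θ hθ)
  zero_mem' θ hθ := by rwa [sub_zero]

def periodicConv (p : ℝ) (K f : ℝ → ℝ) (θ : ℝ) : ℝ := ∫ φ in 0..p, K (θ - φ) * f φ

section periodicConv

variable {p : ℝ} {K : ℝ → ℝ}

lemma periodic_periodicConv (hK : Periodic K p) (f : ℝ → ℝ) : Periodic (periodicConv p K f) p := by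
  intro θ
  simp only [periodicConv, add_sub_right_comm, hK _]

lemma periodicConv_congr_ae {f g : ℝ → ℝ} (hfg : f =ᵐ[volume] g) :
    periodicConv p K f = periodicConv p K g :=
  funext fun _ => intervalIntegral.integral_congr_ae (hfg.mono fun _ h _ => by rw [h])

lemma continuous_periodicConv (hp : p ≠ 0) (hK : Periodic K p) (hKc : Continuous K)
    {f : ℝ → ℝ} (hf : IntervalIntegrable f volume 0 p) : Continuous (periodicConv p K f) := by
  obtain ⟨C, hC⟩ := (hK.isBounded_of_continuous hp hKc).exists_norm_le
  refine intervalIntegral.continuous_of_dominated_interval (bound := fun φ => C * ‖f φ‖)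
    (fun θ => ((by fun_prop : Continuous fun φ => K (θ - φ)).aestronglyMeasurable).mul
      hf.def'.aestronglyMeasurable) (fun θ => .of_forall fun φ _ => ?_) (hf.norm.const_mul C)
    (.of_forall fun φ _ => by fun_prop)
  rw [norm_mul]
  exact mul_le_mul_of_nonneg_right (hC _ (mem_range_self _)) (norm_nonneg _)

lemma Function.Periodic.intervalIntegral_comp_sub_left (hK : Periodic K p) (θ : ℝ) :
    ∫ φ in 0..p, K (θ - φ) = ∫ x in 0..p, K x := by
  have h := hK.intervalIntegral_add_eq (θ - p) 0
  rw [sub_add_cancel, zero_add] at h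
  rw [intervalIntegral.integral_comp_sub_left K θ, sub_zero, h]

variable (hp : 0 < p) (hK : Periodic K p) (hKc : Continuous K) (hK0 : ∀ x, 0 ≤ K x)
  (hK1 : ∫ x in 0..p, K x = 1)
include hp hK hKc hK0 hK1

lemma mem_levelShifts_of_forall_le {g : ℝ → ℝ} (hgc : Continuous g)
    (hg : periodicConv p K g = g) {M : ℝ} (hM : ∀ θ, g θ ≤ M) {t : ℝ} (ht : 0 < K t) :
    t ∈ levelShifts g M := by
  intro θ hθ
  set h : ℝ → ℝ := fun φ => K (θ - φ) * (M - g φ)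
  have hKθc : Continuous fun φ => K (θ - φ) := by fun_prop
  have hint : ∫ φ in 0..p, h φ = 0 := by
    calc ∫ φ in 0..p, h φ
        = ∫ φ in 0..p, (M * K (θ - φ) - K (θ - φ) * g φ) :=
          intervalIntegral.integral_congr fun φ _ => by simp only [h]; ring
      _ = M * (∫ φ in 0..p, K (θ - φ)) - periodicConv p K g θ := by
          rw [intervalIntegral.integral_sub (Continuous.intervalIntegrable (by fun_prop) _ _)
            (Continuous.intervalIntegrable (by fun_prop) _ _), intervalIntegral.integral_const_mul]
          rfl
      _ = 0 := by rw [hK.intervalIntegral_comp_sub_left θ, hK1, hg, hθ, mul_one, sub_self]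
  have hgper : Periodic g p := hg ▸ periodic_periodicConv hK g
  have hhper : Periodic h p := fun φ => by
    simp only [h, sub_add_eq_sub_sub, hK.sub_eq, hgper φ]
  have hzero := congrFun (hhper.eq_zero_of_intervalIntegral_eq_zero hp (hKθc.mul
    (continuous_const.sub hgc)) (fun φ => mul_nonneg (hK0 _) (sub_nonneg.2 (hM φ))) hint) (θ - t)
  simp only [h, sub_sub_cancel, Pi.zero_apply, mul_eq_zero, ht.ne', false_or, sub_eq_zero] at hzero
  exact hzero.symm

theorem exists_eq_const_of_periodicConv_eq {g : ℝ → ℝ} (hgc : Continuous g)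
    (hg : periodicConv p K g = g) : ∃ c, g = fun _ => c := by
  have hgper : Periodic g p := hg ▸ periodic_periodicConv hK g
  obtain ⟨_, ⟨θ₀, rfl⟩, hmax⟩ :=
    (hgper.compact_of_continuous hp.ne' hgc).exists_isGreatest (range_nonempty g)
  obtain ⟨t₀, ht₀⟩ : ∃ t, 0 < K t := by
    by_contra! hK_le
    simp [funext fun t => le_antisymm (hK_le t) (hK0 t)] at hK1
  obtain ⟨δ, hδ, hball⟩ := Metric.isOpen_iff.1 (isOpen_lt continuous_const hKc) t₀ ht₀
  have htop : levelShifts g (g θ₀) = ⊤ :=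
    AddSubmonoid.eq_top_of_ball_subset hδ hp
      (fun t ht => mem_levelShifts_of_forall_le hp hK hKc hK0 hK1 hgc hg
        (fun θ => hmax (mem_range_self θ)) (hball ht))
      (fun θ hθ => by rw [hgper.sub_eq, hθ]) (fun θ hθ => by rw [sub_neg_eq_add, hgper, hθ])
  refine ⟨g θ₀, funext fun θ => ?_⟩
  have hmem : θ₀ - θ ∈ levelShifts g (g θ₀) := htop ▸ AddSubmonoid.mem_top _
  simpa using hmem θ₀ rfl

end periodicConv

theorem convolution_fixedPoint_ae_const_general (K : ℝ → ℝ) (hcont : Continuous K)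
    (hper : Function.Periodic K (2 * π)) (hnonneg : ∀ θ, 0 ≤ K θ)
    (hnorm : ∫ θ in (0 : ℝ)..(2 * π), K θ = 1)
    (f : ℝ → ℝ) (hf : MemLp f ⊤ (volume : Measure ℝ))
    (hfix : ∀ᵐ θ ∂(volume : Measure ℝ), ∫ φ in (0 : ℝ)..(2 * π), K (θ - φ) * f φ = f θ) :
    ∃ c : ℝ, f =ᵐ[volume] fun _ => c := by
  have hfg : f =ᵐ[volume] periodicConv (2 * π) K f := hfix.mono fun _ h => h.symm
  have hf_int : IntervalIntegrable f volume 0 (2 * π) :=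
    ((hf.locallyIntegrable le_top).integrableOn_isCompact isCompact_uIcc).intervalIntegrable
  obtain ⟨c, hc⟩ := exists_eq_const_of_periodicConv_eq two_pi_pos hper hcont hnonneg hnorm
    (continuous_periodicConv two_pi_pos.ne' hper hcont hf_int) (periodicConv_congr_ae hfg.symm)
  exact ⟨c, hc ▸ hfg⟩

/-- If `K : ℝ → ℝ` is continuous, `2π`-periodic, non-negative with `∫_0^{2π} K = 1`, and
`f ∈ L^∞` is a `2π`-periodic function satisfying the convolution equation
`∫_0^{2π} K(θ − φ) f(φ) dφ = f(θ)` for almost every `θ`, then `f` is almost everywhere equal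
to a constant. -/
theorem convolution_fixedPoint_ae_const (K : ℝ → ℝ) (hcont : Continuous K)
    (hper : Function.Periodic K (2 * π)) (hnonneg : ∀ θ, 0 ≤ K θ)
    (hnorm : ∫ θ in (0 : ℝ)..(2 * π), K θ = 1)
    (f : ℝ → ℝ) (hf : MemLp f ⊤ (volume : Measure ℝ))
    (hfper : Function.Periodic f (2 * π))
    (hfix : ∀ᵐ θ ∂(volume : Measure ℝ), ∫ φ in (0 : ℝ)..(2 * π), K (θ - φ) * f φ = f θ) :
    ∃ c : ℝ, f =ᵐ[volume] fun _ => c :=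
  convolution_fixedPoint_ae_const_general K hcont hper hnonneg hnorm f hf hfix
end
end
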